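/- In a homogeneously self-similar graph with constant inner degree b > θ_X − 1, a vertex has infinite degree if and only if it lies in F^n for every positive integer n, which happens if and only if it is an origin vertex (a fixed point of ψ). -/

import Mathlib

variable {V : Type*}

/-- `C` is a cell w.r.t. `F`: a connected component of `V X ∖ F`. -/
def IsCellOf (G : SimpleGraph V) (F : Set V) (C : Set V) : Prop :=
  C.Nonempty ∧ C ⊆ Fᶜ ∧ (G.induce C).Preconnected ∧
    ∀ D : Set V, C ⊆ D → D ⊆ Fᶜ → (G.induce D).Preconnected → D = C

/-- vertex boundary θC -/
def vBoundary (G : SimpleGraph V) (C : Set V) : Set V :=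
  {v | v ∉ C ∧ ∃ c ∈ C, G.Adj v c}

/-- closure of a set of vertices -/
def vClosure (G : SimpleGraph V) (C : Set V) : Set V := C ∪ vBoundary G C

/-- edge boundary δC -/
def eBoundary (G : SimpleGraph V) (C : Set V) : Set (Sym2 V) :=
  {e | ∃ x y, G.Adj x y ∧ e = s(x, y) ∧ x ∈ C ∧ y ∉ C}

/-- edges of the cell graph Ĉ (subgraph spanned by the closure of C) -/
def cellEdges (G : SimpleGraph V) (C : Set V) : Set (Sym2 V) :=
  {e | ∃ x y, G.Adj x y ∧ e = s(x, y) ∧ x ∈ vClosure G C ∧ y ∈ vClosure G C}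

/-- the reduced graph X_F -/
def reducedGraph (G : SimpleGraph V) (F : Set V) : SimpleGraph F where
  Adj x y := x ≠ y ∧ ∃ C : Set V, IsCellOf G F C ∧
    (x : V) ∈ vBoundary G C ∧ (y : V) ∈ vBoundary G C
  symm := by
    constructor
    rintro x y ⟨hxy, C, hC, hx, hy⟩
    exact ⟨hxy.symm, C, hC, hy, hx⟩
  loopless := by constructor; rintro x ⟨hx, -⟩; exact hx rfl

/-- F^n = ψ^n (V X), as a subset of V -/
def Fpow (G : SimpleGraph V) (F : Set V) (ψ : G ≃g reducedGraph G F) : ℕ → Set V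
  | 0 => Set.univ
  | n + 1 => (fun v => ((ψ v : F) : V)) '' Fpow G F ψ n

/-- (F1) no two vertices of F adjacent -/
def AxiomF1 (G : SimpleGraph V) (F : Set V) : Prop :=
  ∀ x ∈ F, ∀ y ∈ F, ¬ G.Adj x y

/-- (F2) closures of distinct cells share at most one vertex -/
def AxiomF2 (G : SimpleGraph V) (F : Set V) : Prop :=
  ∀ C D : Set V, IsCellOf G F C → IsCellOf G F D → C ≠ D →
    (vClosure G C ∩ vClosure G D).Subsingleton

/-- (H1) cell graphs finite, pairwise isomorphic via boundary preserving isomorphisms -/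
def AxiomH1 (G : SimpleGraph V) (F : Set V) : Prop :=
  (∀ C : Set V, IsCellOf G F C → (vClosure G C).Finite) ∧
  ∀ C D : Set V, IsCellOf G F C → IsCellOf G F D →
    ∃ α : G.induce (vClosure G C) ≃g G.induce (vClosure G D),
      ∀ x : vClosure G C, (x : V) ∈ vBoundary G C → ((α x : vClosure G D) : V) ∈ vBoundary G D

/-- (H2) any two distinct boundary vertices of a cell are at distance ν -/
def AxiomH2 (G : SimpleGraph V) (F : Set V) (ν : ℕ) : Prop :=
  ∀ C : Set V, IsCellOf G F C → ∀ x ∈ vBoundary G C, ∀ y ∈ vBoundary G C,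
    x ≠ y → G.dist x y = ν

/-- constant inner degree `b` : every boundary vertex of every cell has degree b in the cell graph -/
def ConstInnerDegree (G : SimpleGraph V) (F : Set V) (b : ℕ) : Prop :=
  ∀ C : Set V, IsCellOf G F C → ∀ v ∈ vBoundary G C,
    {u ∈ vClosure G C | G.Adj v u}.ncard = b

/-- bounded geometry: vertex degrees uniformly bounded -/
def BoundedGeometry (G : SimpleGraph V) : Prop :=
  ∃ M : ℕ, ∀ v : V, (G.neighborSet v).Finite ∧ (G.neighborSet v).ncard ≤ M

/-- volume of a set of vertices -/
noncomputable def volOf (G : SimpleGraph V) (A : Set V) : ℕ :=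
  ∑ᶠ v ∈ A, (G.neighborSet v).ncard

/-- growth function -/
noncomputable def Vfun (G : SimpleGraph V) (x : V) (r : ℕ) : ℕ :=
  volOf G {y | G.dist x y ≤ r}

/-!
Read as a map `V → V` with image `F`, `ψ` at least doubles graph distances, because by (F1) every
edge of the reduced graph costs two edges of `G`. A vertex lying in every `F^n` has a backward
orbit whose consecutive distances shrink geometrically, so it is a fixed point of `ψ`.

For `v ∈ F` the neighbours of `v` are split among the cells at `v`, `b` in each, while its
reduced neighbours are covered by the `θ_X - 1` other boundary vertices of those cells, and by (F2)
distinct cells at `v` yield distinct reduced neighbours. Hence finite degree passes from `x` to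
`ψ x`; vertices outside `F` have finite degree by (H1), so by induction so has every vertex outside
some `F^n`. At a fixed point `v` of finite degree with `c` cells one would get
`c * b = deg v = deg_{X_F} v ≤ c * (θ_X - 1)`, contradicting `b > θ_X - 1`.
-/

open SimpleGraph Set Function

section Cells

variable {V : Type*} {G : SimpleGraph V} {F C D : Set V} {c d v : V}

/-- The cell containing `c`; it is empty when `c ∈ F`. -/
def cellOf (G : SimpleGraph V) (F : Set V) (c : V) : Set V :=
  {w | ∃ (hc : c ∉ F) (hw : w ∉ F), (G.induce Fᶜ).Reachable ⟨c, hc⟩ ⟨w, hw⟩}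

lemma cellOf_subset_compl : cellOf G F c ⊆ Fᶜ := fun _ ⟨_, hw, _⟩ => hw

lemma notMem_of_mem_vBoundary_cellOf (h : v ∈ vBoundary G (cellOf G F c)) : c ∉ F :=
  let ⟨_, _, hd, _⟩ := h
  hd.1

lemma mem_cellOf_self (hc : c ∉ F) : c ∈ cellOf G F c := ⟨hc, hc, .rfl⟩

lemma mem_cellOf_of_adj (hc : c ∉ F) (hd : d ∉ F) (h : G.Adj c d) : d ∈ cellOf G F c :=
  ⟨hc, hd, (induce_adj.2 h : (G.induce Fᶜ).Adj ⟨c, hc⟩ ⟨d, hd⟩).reachable⟩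

lemma reachable_induce_cellOf (hc : c ∉ F) {w : V} (hw : w ∈ cellOf G F c) :
    (G.induce (cellOf G F c)).Reachable ⟨c, mem_cellOf_self hc⟩ ⟨w, hw⟩ := by
  classical
  obtain ⟨-, hwF, ⟨p⟩⟩ := hw
  have hsupp : ∀ z ∈ (p.map (Embedding.induce Fᶜ).toHom).support, z ∈ cellOf G F c := by
    intro z hz
    rw [Walk.support_map, List.mem_map] at hz
    obtain ⟨z', hz', rfl⟩ := hz
    exact ⟨hc, z'.2, (p.takeUntil z' hz').reachable⟩
  exact ⟨(p.map (Embedding.induce Fᶜ).toHom).induce _ hsupp⟩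

lemma preconnected_induce_cellOf (hc : c ∉ F) : (G.induce (cellOf G F c)).Preconnected :=
  fun ⟨_, hx⟩ ⟨_, hy⟩ =>
    (reachable_induce_cellOf hc hx).symm.trans (reachable_induce_cellOf hc hy)

lemma isCellOf_cellOf (hc : c ∉ F) : IsCellOf G F (cellOf G F c) := by
  refine ⟨⟨c, mem_cellOf_self hc⟩, cellOf_subset_compl, preconnected_induce_cellOf hc, ?_⟩
  intro D hsub hDF hD
  refine (hsub.antisymm fun w hw => ⟨hc, hDF hw, ?_⟩).symm
  exact (hD ⟨c, hsub (mem_cellOf_self hc)⟩ ⟨w, hw⟩).map (G.induceHomOfLE hDF).toHom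

lemma IsCellOf.eq_cellOf (hC : IsCellOf G F C) (hc : c ∈ C) : C = cellOf G F c := by
  obtain ⟨-, hCF, hpre, hmax⟩ := hC
  have hsub : C ⊆ cellOf G F c := fun w hw =>
    ⟨hCF hc, hCF hw, (hpre ⟨c, hc⟩ ⟨w, hw⟩).map (G.induceHomOfLE hCF).toHom⟩
  exact (hmax _ hsub cellOf_subset_compl (preconnected_induce_cellOf (hCF hc))).symm

lemma cellOf_eq_of_adj (hc : c ∉ F) (hd : d ∉ F) (h : G.Adj c d) :
    cellOf G F d = cellOf G F c :=
  ((isCellOf_cellOf hc).eq_cellOf (mem_cellOf_of_adj hc hd h)).symm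

lemma IsCellOf.disjoint (hC : IsCellOf G F C) (hD : IsCellOf G F D) (hne : C ≠ D) :
    Disjoint C D :=
  Set.disjoint_left.2 fun _ hC' hD' => hne ((hC.eq_cellOf hC').trans (hD.eq_cellOf hD').symm)

lemma IsCellOf.vBoundary_subset (hC : IsCellOf G F C) : vBoundary G C ⊆ F := by
  rintro v ⟨hvC, c, hc, hadj⟩
  by_contra hvF
  rw [hC.eq_cellOf hc] at hvC
  exact hvC (mem_cellOf_of_adj (hC.2.1 hc) hvF hadj.symm)

lemma mem_vBoundary_cellOf (hv : v ∈ F) (hc : c ∉ F) (h : G.Adj v c) :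
    v ∈ vBoundary G (cellOf G F c) :=
  ⟨fun hvc => cellOf_subset_compl hvc hv, c, mem_cellOf_self hc, h⟩

lemma neighborSet_subset_vClosure_cellOf (hc : c ∉ F) :
    G.neighborSet c ⊆ vClosure G (cellOf G F c) := by
  intro u (hu : G.Adj c u)
  by_cases huF : u ∈ F
  · exact Or.inr (mem_vBoundary_cellOf huF hc hu.symm)
  · exact Or.inl (mem_cellOf_of_adj hc huF hu)

end Cells

section Expansion

variable {V : Type*} {G : SimpleGraph V} {F : Set V}

/-- By (F1) a walk between vertices of `F` alternates between `F` and cells, and it can only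
leave a cell through a boundary vertex, so each edge of the reduced graph costs two edges of `G`.
The second conjunct is the invariant for walks that start inside a cell. -/
lemma exists_reducedGraph_walk (hF1 : AxiomF1 G F) {x b : V} (p : G.Walk x b) (hb : b ∈ F) :
    (∀ hx : x ∈ F, ∃ q : (reducedGraph G F).Walk ⟨x, hx⟩ ⟨b, hb⟩, 2 * q.length ≤ p.length) ∧
    ∀ a : F, (a : V) ∈ vBoundary G (cellOf G F x) →
      ∃ q : (reducedGraph G F).Walk a ⟨b, hb⟩, 2 * q.length ≤ p.length + 1 := by
  induction p with
  | nil =>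
    exact ⟨fun _ => ⟨.nil, by simp⟩,
      fun _ ha => absurd hb (notMem_of_mem_vBoundary_cellOf ha)⟩
  | @cons x y _ h p ih =>
    refine ⟨fun hx => ?_, fun a ha => ?_⟩
    · have hy : y ∉ F := fun hy => hF1 x hx y hy h
      obtain ⟨q, hq⟩ := (ih hb).2 ⟨x, hx⟩ (mem_vBoundary_cellOf hx hy h)
      exact ⟨q, by simpa using hq⟩
    have hx : x ∉ F := notMem_of_mem_vBoundary_cellOf ha
    by_cases hy : y ∈ F
    · obtain ⟨q, hq⟩ := (ih hb).1 hy
      by_cases hay : a = ⟨y, hy⟩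
      · subst hay
        exact ⟨q, by simp only [Walk.length_cons]; omega⟩
      · have hadj : (reducedGraph G F).Adj a ⟨y, hy⟩ :=
          ⟨hay, cellOf G F x, isCellOf_cellOf hx, ha, mem_vBoundary_cellOf hy hx h.symm⟩
        exact ⟨.cons hadj q, by simp only [Walk.length_cons]; omega⟩
    · rw [← cellOf_eq_of_adj hx hy h] at ha
      obtain ⟨q, hq⟩ := (ih hb).2 a ha
      exact ⟨q, by simp only [Walk.length_cons]; omega⟩

lemma two_mul_dist_le_dist_coe_apply (hconn : G.Preconnected) (hF1 : AxiomF1 G F)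
    (ψ : G ≃g reducedGraph G F) (x y : V) :
    2 * G.dist x y ≤ G.dist (ψ x : V) (ψ y : V) := by
  obtain ⟨p, hp⟩ := (hconn (ψ x : V) (ψ y : V)).exists_walk_length_eq_dist
  obtain ⟨q, hq⟩ := (exists_reducedGraph_walk hF1 p (ψ y).2).1 (ψ x).2
  have hdist : G.dist x y ≤ q.length := by
    simpa using dist_le (q.map ψ.symm.toHom)
  omega

end Expansion

section Dynamics

variable {α : Type*} {f : α → α} {d : α → α → ℕ}

lemma pow_two_mul_le_iterate (hexp : ∀ x y, 2 * d x y ≤ d (f x) (f y)) (n : ℕ) (x y : α) :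
    2 ^ n * d x y ≤ d (f^[n] x) (f^[n] y) := by
  induction n generalizing x y with
  | zero => simp
  | succ n ih =>
    calc 2 ^ (n + 1) * d x y = 2 ^ n * (2 * d x y) := by ring
      _ ≤ 2 ^ n * d (f x) (f y) := Nat.mul_le_mul_left _ (hexp x y)
      _ ≤ d (f^[n + 1] x) (f^[n + 1] y) := ih (f x) (f y)

lemma forall_mem_range_iterate_iff_isFixedPt (hf : Injective f)
    (hd : ∀ x y, d x y = 0 → x = y) (hexp : ∀ x y, 2 * d x y ≤ d (f x) (f y)) {v : α} :
    (∀ n, v ∈ range f^[n]) ↔ IsFixedPt f v := by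
  refine ⟨fun hv => ?_, fun hfix n => ⟨v, (hfix.iterate n).eq⟩⟩
  obtain ⟨w, hw⟩ := hv 1
  set n := d w v
  obtain ⟨u, hu⟩ := hv (n + 1)
  have hw' : f^[n] u = w := hf (by rw [← iterate_succ_apply' f, hu, ← hw]; rfl)
  have hu' : f^[n] (f u) = v := by rw [← iterate_succ_apply f, hu]
  have hfix : IsFixedPt f u := by
    refine (hd _ _ ?_).symm
    have hbound := pow_two_mul_le_iterate hexp n u (f u)
    rw [hw', hu'] at hbound
    by_contra hne
    have hpow := Nat.le_mul_of_pos_right (2 ^ n) (Nat.pos_of_ne_zero hne)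
    have hlt : n < 2 ^ n := Nat.lt_two_pow_self
    omega
  rw [← hu, (hfix.iterate (n + 1)).eq]
  exact hfix

end Dynamics

section Degrees

variable {V : Type*} {G : SimpleGraph V} {F C : Set V} {v z : V}

lemma finsum_mem_const_eq_ncard_mul {ι : Type*} {s : Set ι} (hs : s.Finite) (b : ℕ) :
    ∑ᶠ _ ∈ s, b = s.ncard * b := by
  rw [finsum_mem_eq_finite_toFinset_sum _ hs, Finset.sum_const, smul_eq_mul,
    ncard_eq_toFinset_card _ hs]

def cellsAt (G : SimpleGraph V) (F : Set V) (v : V) : Set (Set V) :=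
  {C | IsCellOf G F C ∧ v ∈ vBoundary G C}

lemma cellsAt_eq_image_cellOf (hF1 : AxiomF1 G F) (hv : v ∈ F) :
    cellsAt G F v = cellOf G F '' G.neighborSet v := by
  ext C
  constructor
  · rintro ⟨hC, -, c, hc, hadj⟩
    exact ⟨c, hadj, (hC.eq_cellOf hc).symm⟩
  · rintro ⟨c, hadj, rfl⟩
    have hc : c ∉ F := fun hc => hF1 v hv c hc hadj
    exact ⟨isCellOf_cellOf hc, mem_vBoundary_cellOf hv hc hadj⟩

lemma neighborSet_eq_biUnion_cellsAt (hF1 : AxiomF1 G F) (hv : v ∈ F) :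
    G.neighborSet v = ⋃ C ∈ cellsAt G F v, C ∩ G.neighborSet v := by
  refine subset_antisymm (fun c hc => ?_) (iUnion₂_subset fun _ _ => inter_subset_right)
  have hcF : c ∉ F := fun hcF => hF1 v hv c hcF hc
  rw [cellsAt_eq_image_cellOf hF1 hv, biUnion_image]
  exact mem_biUnion hc ⟨mem_cellOf_self hcF, hc⟩

lemma finite_cellsAt_of_finite_neighborSet (hF1 : AxiomF1 G F) (hv : v ∈ F)
    (h : (G.neighborSet v).Finite) : (cellsAt G F v).Finite := by
  rw [cellsAt_eq_image_cellOf hF1 hv]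
  exact h.image _

lemma finite_neighborSet_of_notMem (hH1 : AxiomH1 G F) (hv : v ∉ F) :
    (G.neighborSet v).Finite :=
  (hH1.1 _ (isCellOf_cellOf hv)).subset (neighborSet_subset_vClosure_cellOf hv)

lemma finite_neighborSet_of_finite_cellsAt (hF1 : AxiomF1 G F) (hH1 : AxiomH1 G F)
    (hv : v ∈ F) (h : (cellsAt G F v).Finite) : (G.neighborSet v).Finite := by
  rw [neighborSet_eq_biUnion_cellsAt hF1 hv]
  exact h.biUnion fun C hC => (hH1.1 C hC.1).subset (inter_subset_left.trans subset_union_left)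

lemma ncard_neighborSet_eq (hF1 : AxiomF1 G F) {b : ℕ} (hb : ConstInnerDegree G F b)
    (hv : v ∈ F) (hfin : (G.neighborSet v).Finite) :
    (G.neighborSet v).ncard = (cellsAt G F v).ncard * b := by
  have hcells := finite_cellsAt_of_finite_neighborSet hF1 hv hfin
  have hdeg : ∀ C ∈ cellsAt G F v, (C ∩ G.neighborSet v).ncard = b := by
    rintro C ⟨hC, hvC⟩
    rw [← hb C hC v hvC]
    congr 1
    ext u
    refine ⟨fun ⟨huC, hu⟩ => ⟨Or.inl huC, hu⟩, fun ⟨hu, hadj⟩ => ⟨?_, hadj⟩⟩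
    exact hu.resolve_right fun huB => hF1 v hv u (hC.vBoundary_subset huB) hadj
  rw [neighborSet_eq_biUnion_cellsAt hF1 hv,
    hcells.ncard_biUnion (fun C _ => hfin.subset inter_subset_right)
      (fun C hC D hD hne => ((hC.1.disjoint hD.1 hne).mono inter_subset_left inter_subset_left)),
    finsum_mem_congr rfl hdeg, finsum_mem_const_eq_ncard_mul hcells]

lemma reducedGraph_neighborSet_subset (hv : v ∈ F) :
    (reducedGraph G F).neighborSet ⟨v, hv⟩ ⊆
      ⋃ C ∈ cellsAt G F v, Subtype.val ⁻¹' (vBoundary G C \ {v}) := by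
  rintro ⟨z, hz⟩ ⟨hne, C, hC, hvC, hzC⟩
  exact mem_biUnion ⟨hC, hvC⟩ ⟨hzC, fun h => hne (Subtype.ext h.symm)⟩

lemma ncard_reducedGraph_neighborSet_le (hH1 : AxiomH1 G F) {θX : ℕ}
    (hθX : ∀ C : Set V, IsCellOf G F C → (vBoundary G C).ncard = θX) (hv : v ∈ F)
    (hcells : (cellsAt G F v).Finite) :
    ((reducedGraph G F).neighborSet ⟨v, hv⟩).ncard ≤ (cellsAt G F v).ncard * (θX - 1) := by
  have hrange : ∀ C ∈ cellsAt G F v, vBoundary G C \ {v} ⊆ range (Subtype.val : F → V) :=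
    fun C hC => sdiff_subset.trans (hC.1.vBoundary_subset.trans Subtype.range_coe.superset)
  have hsize : ∀ C ∈ cellsAt G F v,
      (Subtype.val ⁻¹' (vBoundary G C \ {v}) : Set F).ncard = θX - 1 := by
    intro C hC
    rw [ncard_preimage_of_injective_subset_range Subtype.val_injective (hrange C hC),
      ncard_sdiff_singleton_of_mem hC.2, hθX C hC.1]
  have hfin : ∀ C ∈ cellsAt G F v, (Subtype.val ⁻¹' (vBoundary G C \ {v}) : Set F).Finite :=
    fun C hC => (((hH1.1 C hC.1).subset subset_union_right).sdiff).preimage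
      Subtype.val_injective.injOn
  calc ((reducedGraph G F).neighborSet ⟨v, hv⟩).ncard
      ≤ (⋃ C ∈ cellsAt G F v, Subtype.val ⁻¹' (vBoundary G C \ {v}) : Set F).ncard :=
        ncard_le_ncard (reducedGraph_neighborSet_subset hv) (hcells.biUnion hfin)
    _ ≤ ∑ᶠ C ∈ cellsAt G F v, (Subtype.val ⁻¹' (vBoundary G C \ {v}) : Set F).ncard :=
        hcells.ncard_biUnion_le _
    _ = (cellsAt G F v).ncard * (θX - 1) := by
        rw [finsum_mem_congr rfl hsize, finsum_mem_const_eq_ncard_mul hcells]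

lemma subsingleton_cellsAt_inter (hF2 : AxiomF2 G F) (hvz : v ≠ z) :
    (cellsAt G F v ∩ cellsAt G F z).Subsingleton := by
  rintro C ⟨⟨hC, hvC⟩, -, hzC⟩ D ⟨⟨hD, hvD⟩, -, hzD⟩
  by_contra hne
  exact hvz (hF2 C D hC hD hne ⟨Or.inr hvC, Or.inr hvD⟩ ⟨Or.inr hzC, Or.inr hzD⟩)

lemma finite_cellsAt_of_finite_reducedGraph_neighborSet (hF2 : AxiomF2 G F)
    (hnt : ∀ C : Set V, IsCellOf G F C → (vBoundary G C).Nontrivial) (hv : v ∈ F)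
    (h : ((reducedGraph G F).neighborSet ⟨v, hv⟩).Finite) : (cellsAt G F v).Finite := by
  refine (h.biUnion fun z hz => (subsingleton_cellsAt_inter hF2
    fun hvz => hz.1 (Subtype.ext hvz)).finite).subset ?_
  intro C hC
  obtain ⟨z, hzC, hzv⟩ := (hnt C hC.1).exists_ne v
  have hzF : z ∈ F := hC.1.vBoundary_subset hzC
  have hadj : (reducedGraph G F).Adj ⟨v, hv⟩ ⟨z, hzF⟩ :=
    ⟨fun h => hzv (congrArg Subtype.val h).symm, C, hC.1, hC.2, hzC⟩
  exact mem_biUnion hadj ⟨hC, hC.1, hzC⟩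

end Degrees

section SelfMap

variable {V : Type*} {G : SimpleGraph V} {F : Set V}

def selfMap (ψ : G ≃g reducedGraph G F) (v : V) : V := ψ v

lemma range_selfMap (ψ : G ≃g reducedGraph G F) : range (selfMap ψ) = F := by
  ext v
  exact ⟨fun ⟨w, hw⟩ => hw ▸ (ψ w).2, fun hv => ⟨ψ.symm ⟨v, hv⟩, by simp [selfMap]⟩⟩

lemma injective_selfMap (ψ : G ≃g reducedGraph G F) : Injective (selfMap ψ) :=
  Subtype.val_injective.comp ψ.injective

lemma Fpow_eq_range_iterate (ψ : G ≃g reducedGraph G F) (n : ℕ) :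
    Fpow G F ψ n = range (selfMap ψ)^[n] := by
  induction n with
  | zero => simp [Fpow]
  | succ n ih => rw [Fpow, ih, ← range_comp, iterate_succ']; rfl

lemma finite_neighborSet_coe_apply (hF1 : AxiomF1 G F) (hF2 : AxiomF2 G F) (hH1 : AxiomH1 G F)
    (hnt : ∀ C : Set V, IsCellOf G F C → (vBoundary G C).Nontrivial)
    (ψ : G ≃g reducedGraph G F) {x : V} (h : (G.neighborSet x).Finite) :
    (G.neighborSet (ψ x : V)).Finite := by
  refine finite_neighborSet_of_finite_cellsAt hF1 hH1 (ψ x).2 ?_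
  refine finite_cellsAt_of_finite_reducedGraph_neighborSet hF2 hnt (ψ x).2 ?_
  rw [← ψ.image_neighborSet]
  exact h.image _

lemma finite_neighborSet_of_notMem_range_iterate (hF1 : AxiomF1 G F) (hF2 : AxiomF2 G F)
    (hH1 : AxiomH1 G F) (hnt : ∀ C : Set V, IsCellOf G F C → (vBoundary G C).Nontrivial)
    (ψ : G ≃g reducedGraph G F) (n : ℕ) {v : V} (hv : v ∉ range (selfMap ψ)^[n]) :
    (G.neighborSet v).Finite := by
  induction n generalizing v with
  | zero => simp at hv
  | succ n ih =>
    by_cases hvF : v ∈ F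
    · obtain ⟨w, rfl⟩ : v ∈ range (selfMap ψ) := (range_selfMap ψ).symm ▸ hvF
      refine finite_neighborSet_coe_apply hF1 hF2 hH1 hnt ψ (ih fun ⟨u, hu⟩ => hv ⟨u, ?_⟩)
      rw [iterate_succ_apply', hu]
    · exact finite_neighborSet_of_notMem hH1 hvF

lemma not_finite_neighborSet_of_isFixedPt [Nontrivial V] (hconn : G.Preconnected)
    (hF1 : AxiomF1 G F) {θX : ℕ}
    (hθX : ∀ C : Set V, IsCellOf G F C → (vBoundary G C).ncard = θX) (hH1 : AxiomH1 G F)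
    {b : ℕ} (hb : ConstInnerDegree G F b) (hbθ : θX - 1 < b)
    (ψ : G ≃g reducedGraph G F) {v : V} (hfix : IsFixedPt (selfMap ψ) v) :
    ¬ (G.neighborSet v).Finite := by
  intro hfin
  have hv : v ∈ F := hfix ▸ (ψ v).2
  have hψv : ψ v = ⟨v, hv⟩ := Subtype.ext hfix.eq
  have hdeg_reduced : ((reducedGraph G F).neighborSet ⟨v, hv⟩).ncard =
      (G.neighborSet v).ncard := by
    rw [← hψv, ← ψ.image_neighborSet, ncard_image_of_injective _ ψ.injective]
  have hdeg := ncard_neighborSet_eq hF1 hb hv hfin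
  have hpos : 0 < (cellsAt G F v).ncard * b :=
    hdeg ▸ (ncard_pos hfin).2 (G.neighborSet_nonempty.2 (hconn.not_isIsolated v))
  have hcount : (cellsAt G F v).ncard * b ≤ (cellsAt G F v).ncard * (θX - 1) := by
    rw [← hdeg, ← hdeg_reduced]
    exact ncard_reducedGraph_neighborSet_le hH1 hθX hv
      (finite_cellsAt_of_finite_neighborSet hF1 hv hfin)
  exact hbθ.not_ge (Nat.le_of_mul_le_mul_left hcount (Nat.pos_of_mul_pos_right hpos))

end SelfMap

theorem infinite_degree_iff_origin_vertex_general
    {V : Type*} [Infinite V] (G : SimpleGraph V) (hconn : G.Connected)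
    (F : Set V) (ψ : G ≃g reducedGraph G F)
    (hF1 : AxiomF1 G F) (hF2 : AxiomF2 G F) (hH1 : AxiomH1 G F)
    (θX : ℕ) (hθ : 2 ≤ θX)
    (hθX : ∀ C : Set V, IsCellOf G F C → (vBoundary G C).ncard = θX)
    (b : ℕ) (hb : ConstInnerDegree G F b) (hbθ : θX - 1 < b)
    (v : V) :
    (¬ (G.neighborSet v).Finite ↔ ∀ n : ℕ, 1 ≤ n → v ∈ Fpow G F ψ n)
    ∧ ((∀ n : ℕ, 1 ≤ n → v ∈ Fpow G F ψ n) ↔ ((ψ v : F) : V) = v) := by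
  have hnt : ∀ C : Set V, IsCellOf G F C → (vBoundary G C).Nontrivial := fun C hC =>
    (one_lt_ncard_iff_nontrivial_and_finite.1 (by rw [hθX C hC]; omega)).1
  have hFpow : (∀ n : ℕ, 1 ≤ n → v ∈ Fpow G F ψ n) ↔ ∀ n, v ∈ range (selfMap ψ)^[n] := by
    simp only [Fpow_eq_range_iterate]
    exact ⟨fun h n => n.eq_zero_or_pos.elim (by rintro rfl; simp) (h n), fun h n _ => h n⟩
  have horigin : (∀ n, v ∈ range (selfMap ψ)^[n]) ↔ IsFixedPt (selfMap ψ) v :=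
    forall_mem_range_iterate_iff_isFixedPt (injective_selfMap ψ)
      (fun _ _ => hconn.dist_eq_zero_iff.1)
      (two_mul_dist_le_dist_coe_apply hconn.preconnected hF1 ψ)
  rw [hFpow, horigin]
  refine ⟨⟨fun hinf => horigin.1 fun n => ?_,
    not_finite_neighborSet_of_isFixedPt hconn.preconnected hF1 hθX hH1 hb hbθ ψ⟩, Iff.rfl⟩
  by_contra hn
  exact hinf (finite_neighborSet_of_notMem_range_iterate hF1 hF2 hH1 hnt ψ n hn)

/-- In a homogeneously self-similar graph with constant inner degree
`b > θ_X − 1`, a vertex has infinite degree iff it lies in `F^n` for every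
`n ≥ 1`, iff it is an origin vertex (fixed point of `ψ`). -/
theorem infinite_degree_iff_origin_vertex
    {V : Type*} [Infinite V] (G : SimpleGraph V) (hconn : G.Connected)
    (F : Set V) (ψ : G ≃g reducedGraph G F)
    (hF1 : AxiomF1 G F) (hF2 : AxiomF2 G F) (hH1 : AxiomH1 G F)
    (ν : ℕ) (hν : 2 ≤ ν) (hH2 : AxiomH2 G F ν)
    (θX : ℕ) (hθ : 2 ≤ θX)
    (hθX : ∀ C : Set V, IsCellOf G F C → (vBoundary G C).ncard = θX)
    (b : ℕ) (hb : ConstInnerDegree G F b) (hbθ : θX - 1 < b)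
    (v : V) :
    (¬ (G.neighborSet v).Finite ↔ ∀ n : ℕ, 1 ≤ n → v ∈ Fpow G F ψ n)
    ∧ ((∀ n : ℕ, 1 ≤ n → v ∈ Fpow G F ψ n) ↔ ((ψ v : F) : V) = v) :=
  infinite_degree_iff_origin_vertex_general G hconn F ψ hF1 hF2 hH1 θX hθ hθX b hb hbθ v
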